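/- Let F be a left-continuous Wardowski function, a > 0, and suppose F is regular: there exists k ∈ (0,1) with t^k F(t) → 0 as t → 0+. Then φ(t) = sup { s ≥ 0 : a + F(s) ≤ F(t) } is increasing, regressive, and Matkowski tele-admissible: Σ_{n≥0} φⁿ(t) < ∞ for every t ≥ 0. -/

import Mathlib

/-!
Since `F` is left-continuous, the supremum defining `φ t` is attained, so `a + F (φ t) ≤ F t`;
as `F` is finite on `(0, ∞)` this forces `φ t < t`. Along a positive orbit `uₙ = φⁿ t` the
inequality iterates to `F uₙ ≤ F t - n a`, so `F uₙ → -∞` and `uₙ → 0`. Regularity,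
`uₙ^k F uₙ → 0`, then gives `n a uₙ^k ≤ uₙ^k (F t - F uₙ) → 0`, i.e. `uₙ = o(n^(-1/k))`, and
`1/k > 1` makes the orbit summable.
-/

open Filter Topology Set

theorem map_csSup_le_of_tendsto_nhdsLT {α β : Type*} [ConditionallyCompleteLinearOrder α]
    [TopologicalSpace α] [OrderTopology α] [TopologicalSpace β] [Preorder β] [ClosedIicTopology β]
    {f : α → β} {s : Set α} (hne : s.Nonempty) (hbdd : BddAbove s)
    (hf : Tendsto f (𝓝[<] sSup s) (𝓝 (f (sSup s)))) {c : β} (hc : ∀ x ∈ s, f x ≤ c) :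
    f (sSup s) ≤ c := by
  by_cases hmem : sSup s ∈ s
  · exact hc _ hmem
  have hsub : s ⊆ Iio (sSup s) := fun x hx =>
    (le_csSup hbdd hx).lt_of_ne (by rintro rfl; exact hmem hx)
  have : (𝓝[s] sSup s).NeBot := mem_closure_iff_nhdsWithin_neBot.1 (csSup_mem_closure hne hbdd)
  exact le_of_tendsto (hf.mono_left (nhdsWithin_mono _ hsub)) (eventually_nhdsWithin_of_forall hc)

theorem EReal.lt_coe_add_self {x : EReal} (hbot : x ≠ ⊥) (htop : x ≠ ⊤) {a : ℝ} (ha : 0 < a) :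
    x < a + x := by
  lift x to ℝ using ⟨htop, hbot⟩
  exact_mod_cast lt_add_of_pos_left x ha

theorem nat_mul_add_le_of_add_le {a : ℝ} {g : ℕ → ℝ} (h : ∀ n, a + g (n + 1) ≤ g n) (n : ℕ) :
    n * a + g n ≤ g 0 := by
  induction n with
  | zero => simp
  | succ n ih => push_cast; linarith [h n]

theorem tendsto_nhdsGT_zero_of_tendsto_comp_atBot {ι : Type*} {l : Filter ι} {f : ℝ → ℝ}
    (hf : MonotoneOn f (Ioi 0)) {u : ι → ℝ} (hu : ∀ i, 0 < u i)
    (hfu : Tendsto (f ∘ u) l atBot) : Tendsto u l (𝓝[>] 0) := by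
  refine tendsto_nhdsWithin_iff.2 ⟨tendsto_order.2 ⟨fun b hb => .of_forall fun i => hb.trans (hu i),
    fun b hb => (hfu.eventually_lt_atBot (f b)).mono fun i hi => ?_⟩, .of_forall hu⟩
  exact lt_of_not_ge fun hbi => hi.not_ge (hf hb (hu i) hbi)

theorem summable_of_tendsto_nat_mul_rpow {u : ℕ → ℝ} {k : ℝ} (hu : ∀ n, 0 ≤ u n) (hk0 : 0 < k)
    (hk1 : k < 1) (h : Tendsto (fun n : ℕ => n * u n ^ k) atTop (𝓝 0)) : Summable u := by
  have hexp : -k⁻¹ < -1 := neg_lt_neg ((one_lt_inv₀ hk0).2 hk1)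
  refine Summable.of_norm_bounded_eventually_nat (Real.summable_nat_rpow.2 hexp) ?_
  filter_upwards [h.eventually (ge_mem_nhds one_pos), eventually_ge_atTop 1] with n hn hn1
  have hn0 : (0 : ℝ) < n := by exact_mod_cast hn1
  rw [Real.norm_of_nonneg (hu n), ← Real.rpow_le_rpow_iff (hu n) (by positivity) hk0,
    ← Real.rpow_mul hn0.le, neg_mul, inv_mul_cancel₀ hk0.ne', Real.rpow_neg_one, ← one_div,
    le_div_iff₀' hn0]
  exact hn

theorem tendsto_nat_mul_rpow_of_rpow_mul_tendsto_zero {u g : ℕ → ℝ} {a k : ℝ} (ha : 0 < a)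
    (hk : 0 < k) (hu : ∀ n, 0 ≤ u n) (hg : ∀ n, n * a + g n ≤ g 0)
    (hu0 : Tendsto u atTop (𝓝 0)) (hreg : Tendsto (fun n => u n ^ k * g n) atTop (𝓝 0)) :
    Tendsto (fun n : ℕ => n * u n ^ k) atTop (𝓝 0) := by
  have hupper : Tendsto (fun n => (u n ^ k * g 0 - u n ^ k * g n) / a) atTop (𝓝 0) := by
    have hpow : Tendsto (fun n => u n ^ k) atTop (𝓝 0) := by
      simpa [Real.zero_rpow hk.ne'] using hu0.rpow_const (.inr hk.le)
    simpa using ((hpow.mul_const (g 0)).sub hreg).div_const a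
  refine tendsto_of_tendsto_of_tendsto_of_le_of_le tendsto_const_nhds hupper
    (fun n => by have := Real.rpow_nonneg (hu n) k; positivity) fun n => ?_
  rw [le_div_iff₀ ha]
  nlinarith [hg n, Real.rpow_nonneg (hu n) k]

theorem summable_of_add_le_of_tendsto_rpow_mul {f : ℝ → ℝ} {a k : ℝ} (ha : 0 < a)
    (hk : k ∈ Ioo 0 1) (hf : MonotoneOn f (Ioi 0))
    (hreg : Tendsto (fun t => t ^ k * f t) (𝓝[>] 0) (𝓝 0)) {u : ℕ → ℝ} (hu : ∀ n, 0 < u n)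
    (hstep : ∀ n, a + f (u (n + 1)) ≤ f (u n)) : Summable u := by
  have hg := nat_mul_add_le_of_add_le (g := f ∘ u) hstep
  have hfu : Tendsto (f ∘ u) atTop atBot := by
    refine tendsto_atBot_mono (fun n => le_sub_iff_add_le'.2 (hg n)) ?_
    exact tendsto_atBot_add_const_left _ _ <| tendsto_neg_atTop_atBot.comp <|
      tendsto_natCast_atTop_atTop.atTop_mul_const ha
  have hu0 := tendsto_nhdsGT_zero_of_tendsto_comp_atBot hf hu hfu
  exact summable_of_tendsto_nat_mul_rpow (fun n => (hu n).le) hk.1 hk.2 <|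
    tendsto_nat_mul_rpow_of_rpow_mul_tendsto_zero ha hk.1 (fun n => (hu n).le) hg
      (tendsto_nhdsWithin_iff.1 hu0).1 (hreg.comp hu0)

def wardowskiSet (F : ℝ → EReal) (a t : ℝ) : Set ℝ := {s | 0 ≤ s ∧ (a : EReal) + F s ≤ F t}

noncomputable def wardowskiPhi (F : ℝ → EReal) (a t : ℝ) : ℝ := sSup (wardowskiSet F a t)

section Wardowski

variable {F : ℝ → EReal} {a t : ℝ}

theorem zero_mem_wardowskiSet (h0 : F 0 = ⊥) : 0 ∈ wardowskiSet F a t :=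
  ⟨le_rfl, by simp [h0]⟩

theorem apply_ne_bot_of_pos (h0 : F 0 = ⊥) (hF : StrictMonoOn F (Ici 0)) (ht : 0 < t) :
    F t ≠ ⊥ :=
  (h0 ▸ hF self_mem_Ici ht.le ht : ⊥ < F t).ne'

theorem le_of_mem_wardowskiSet (hF : StrictMonoOn F (Ici 0)) (ha : 0 ≤ a) (ht : 0 ≤ t) {s : ℝ}
    (hs : s ∈ wardowskiSet F a t) : s ≤ t := by
  by_contra! hts
  have hle : F s ≤ a + F s := le_add_of_nonneg_left (by exact_mod_cast ha)
  exact (hle.trans hs.2).not_gt (hF ht (ht.trans hts.le) hts)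

theorem bddAbove_wardowskiSet (hF : StrictMonoOn F (Ici 0)) (ha : 0 ≤ a) (ht : 0 ≤ t) :
    BddAbove (wardowskiSet F a t) :=
  ⟨t, fun _ hs => le_of_mem_wardowskiSet hF ha ht hs⟩

theorem wardowskiPhi_nonneg (h0 : F 0 = ⊥) (hF : StrictMonoOn F (Ici 0)) (ha : 0 ≤ a)
    (ht : 0 ≤ t) : 0 ≤ wardowskiPhi F a t :=
  le_csSup (bddAbove_wardowskiSet hF ha ht) (zero_mem_wardowskiSet h0)

theorem wardowskiPhi_le_self (h0 : F 0 = ⊥) (hF : StrictMonoOn F (Ici 0)) (ha : 0 ≤ a)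
    (ht : 0 ≤ t) : wardowskiPhi F a t ≤ t :=
  csSup_le ⟨0, zero_mem_wardowskiSet h0⟩ fun _ hs => le_of_mem_wardowskiSet hF ha ht hs

theorem wardowskiPhi_zero (h0 : F 0 = ⊥) (hF : StrictMonoOn F (Ici 0)) (ha : 0 ≤ a) :
    wardowskiPhi F a 0 = 0 :=
  (wardowskiPhi_le_self h0 hF ha le_rfl).antisymm (wardowskiPhi_nonneg h0 hF ha le_rfl)

theorem monotoneOn_wardowskiPhi (h0 : F 0 = ⊥) (hF : StrictMonoOn F (Ici 0)) (ha : 0 ≤ a) :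
    MonotoneOn (wardowskiPhi F a) (Ici 0) := fun _ h₁ _ h₂ h₁₂ =>
  csSup_le_csSup (bddAbove_wardowskiSet hF ha h₂) ⟨0, zero_mem_wardowskiSet h0⟩
    fun _ hs => ⟨hs.1, hs.2.trans (hF.monotoneOn h₁ h₂ h₁₂)⟩

theorem add_wardowskiPhi_le (h0 : F 0 = ⊥) (hF : StrictMonoOn F (Ici 0)) (ha : 0 ≤ a)
    (hlc : ∀ t : ℝ, 0 < t → Tendsto F (𝓝[<] t) (𝓝 (F t))) (ht : 0 ≤ t) :
    a + F (wardowskiPhi F a t) ≤ F t := by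
  have le_sub_iff {x y : EReal} : x ≤ y - a ↔ a + x ≤ y := by
    rw [add_comm, EReal.le_sub_iff_add_le (.inl (EReal.coe_ne_bot a)) (.inl (EReal.coe_ne_top a))]
  rcases (wardowskiPhi_nonneg h0 hF ha ht).eq_or_lt with hφ | hφ
  · simp [← hφ, h0]
  refine le_sub_iff.1 <| map_csSup_le_of_tendsto_nhdsLT ⟨0, zero_mem_wardowskiSet h0⟩
    (bddAbove_wardowskiSet hF ha ht) (hlc _ hφ) fun s hs => le_sub_iff.2 hs.2

theorem wardowskiPhi_lt_self (h0 : F 0 = ⊥) (hfin : ∀ t, 0 ≤ t → F t < ⊤)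
    (hF : StrictMonoOn F (Ici 0)) (ha : 0 < a)
    (hlc : ∀ t : ℝ, 0 < t → Tendsto F (𝓝[<] t) (𝓝 (F t))) (ht : 0 < t) :
    wardowskiPhi F a t < t := by
  refine (wardowskiPhi_le_self h0 hF ha.le ht.le).lt_of_ne fun hφ => ?_
  have hkey := add_wardowskiPhi_le h0 hF ha.le hlc ht.le
  rw [hφ] at hkey
  exact hkey.not_gt (EReal.lt_coe_add_self (apply_ne_bot_of_pos h0 hF ht) (hfin t ht.le).ne ha)

theorem summable_iterate_wardowskiPhi (h0 : F 0 = ⊥) (hfin : ∀ t, 0 ≤ t → F t < ⊤)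
    (hF : StrictMonoOn F (Ici 0)) (ha : 0 < a)
    (hlc : ∀ t : ℝ, 0 < t → Tendsto F (𝓝[<] t) (𝓝 (F t))) {k : ℝ} (hk : k ∈ Ioo 0 1)
    (hreg : Tendsto (fun t : ℝ => ((t ^ k : ℝ) : EReal) * F t) (𝓝[>] 0) (𝓝 0)) (ht : 0 ≤ t) :
    Summable fun n => (wardowskiPhi F a)^[n] t := by
  set φ := wardowskiPhi F a
  have hmaps : MapsTo φ (Ici 0) (Ici 0) := fun _ hs => wardowskiPhi_nonneg h0 hF ha.le hs
  by_cases hz : ∃ N, φ^[N] t = 0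
  · obtain ⟨N, hN⟩ := hz
    rw [← summable_nat_add_iff N]
    have hφ0 : φ 0 = 0 := wardowskiPhi_zero h0 hF ha.le
    simp [Function.iterate_add_apply, hN, Function.iterate_fixed hφ0]
  push Not at hz
  have hpos n : 0 < φ^[n] t := (hmaps.iterate n ht).lt_of_ne' (hz n)
  have hreal {s : ℝ} (hs : 0 < s) : F s = (F s).toReal :=
    (EReal.coe_toReal (hfin s hs.le).ne (apply_ne_bot_of_pos h0 hF hs)).symm
  refine summable_of_add_le_of_tendsto_rpow_mul (f := fun s => (F s).toReal) ha hk ?_ ?_ hpos ?_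
  · exact fun s₁ hs₁ s₂ hs₂ hs₁₂ => EReal.toReal_le_toReal
      (hF.monotoneOn (Ioi_subset_Ici_self hs₁) (Ioi_subset_Ici_self hs₂) hs₁₂)
      (apply_ne_bot_of_pos h0 hF hs₁) (hfin s₂ hs₂.le).ne
  · refine EReal.tendsto_coe.1 (hreg.congr' (eventually_nhdsWithin_of_forall fun s hs => ?_))
    rw [hreal hs]
    rfl
  · intro n
    have hkey : a + F (φ (φ^[n] t)) ≤ F (φ^[n] t) :=
      add_wardowskiPhi_le h0 hF ha.le hlc (hmaps.iterate n ht)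
    rw [← Function.iterate_succ_apply' φ, hreal (hpos n), hreal (hpos (n + 1))] at hkey
    exact_mod_cast hkey

end Wardowski

theorem wardowski_leftCont_regular_phi_tele_general
    (F : ℝ → EReal)
    (hfin : ∀ t, 0 ≤ t → F t < ⊤)
    (hbot : ∀ t, 0 ≤ t → (F t = ⊥ ↔ t = 0))
    (hmono : ∀ s t, 0 ≤ s → s < t → F s < F t)
    (hlc : ∀ t : ℝ, 0 < t → Tendsto F (nhdsWithin t (Set.Iio t)) (nhds (F t)))
    (hreg : ∃ k ∈ Set.Ioo (0:ℝ) 1,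
      Tendsto (fun t : ℝ => ((t ^ k : ℝ) : EReal) * F t)
        (nhdsWithin 0 (Set.Ioi 0)) (nhds 0))
    (a : ℝ) (ha : 0 < a)
    (φ : ℝ → ℝ) (hφ : ∀ t, φ t = sSup {s : ℝ | 0 ≤ s ∧ (a : EReal) + F s ≤ F t}) :
    (∀ t₁ t₂, 0 ≤ t₁ → t₁ ≤ t₂ → φ t₁ ≤ φ t₂) ∧
    φ 0 = 0 ∧ (∀ t, 0 < t → φ t < t) ∧
    (∀ t, 0 ≤ t → Summable (fun n => φ^[n] t)) := by
  obtain ⟨k, hk, hregk⟩ := hreg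
  obtain rfl : φ = wardowskiPhi F a := funext hφ
  have h0 : F 0 = ⊥ := (hbot 0 le_rfl).2 rfl
  have hF : StrictMonoOn F (Ici 0) := fun s hs t _ hst => hmono s t hs hst
  exact ⟨fun t₁ t₂ h₁ h₁₂ => monotoneOn_wardowskiPhi h0 hF ha.le h₁ (h₁.trans h₁₂) h₁₂,
    wardowskiPhi_zero h0 hF ha.le, fun t ht => wardowskiPhi_lt_self h0 hfin hF ha hlc ht,
    fun t ht => summable_iterate_wardowskiPhi h0 hfin hF ha hlc hk hregk ht⟩

/-- For a left-continuous regular Wardowski function `F` and `a > 0`,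
the function `φ t = sup {s ≥ 0 : a + F s ≤ F t}` is increasing on `[0,∞)`,
regressive, and Matkowski tele-admissible: `Σ_{n} φⁿ t < ∞` for every `t ≥ 0`. -/
theorem wardowski_leftCont_regular_phi_tele
    (F : ℝ → EReal)
    (hfin : ∀ t, 0 ≤ t → F t < ⊤)
    (hbot : ∀ t, 0 ≤ t → (F t = ⊥ ↔ t = 0))
    (hmono : ∀ s t, 0 ≤ s → s < t → F s < F t)
    (hlim : Tendsto F (nhdsWithin 0 (Set.Ioi 0)) (nhds ⊥))
    (hlc : ∀ t : ℝ, 0 < t → Tendsto F (nhdsWithin t (Set.Iio t)) (nhds (F t)))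
    (hreg : ∃ k ∈ Set.Ioo (0:ℝ) 1,
      Tendsto (fun t : ℝ => ((t ^ k : ℝ) : EReal) * F t)
        (nhdsWithin 0 (Set.Ioi 0)) (nhds 0))
    (a : ℝ) (ha : 0 < a)
    (φ : ℝ → ℝ) (hφ : ∀ t, φ t = sSup {s : ℝ | 0 ≤ s ∧ (a : EReal) + F s ≤ F t}) :
    (∀ t₁ t₂, 0 ≤ t₁ → t₁ ≤ t₂ → φ t₁ ≤ φ t₂) ∧
    φ 0 = 0 ∧ (∀ t, 0 < t → φ t < t) ∧
    (∀ t, 0 ≤ t → Summable (fun n => φ^[n] t)) :=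
  wardowski_leftCont_regular_phi_tele_general F hfin hbot hmono hlc hreg a ha φ hφ
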